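/- Characteristic polynomial of the correlation matrix on the XY disorder line (Example 2). Let b ∈ ℝ with 0 < |b| < 1, let u(z) = (z − b)/(1 − b z), and for λ ∈ ℂ let Φ_λ be the 2×2-matrix-valued symbol on the unit circle with Φ_λ(e^{iθ}) = [[iλ, u(e^{iθ})], [−u(e^{−iθ}), iλ]]. Then for every integer N ≥ 1 and every λ ∈ ℂ, D_N[Φ_λ] = (1 − λ²)^{N−1} · (b^{2N} − λ²). (This is det(iλ − A_N) for the BDI chain with f(z) = z^{-1}(z−b)², so the single non-trivial correlation-matrix eigenvalue of a subsystem of size N is |b|^N.) -/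

import Mathlib

/-!
The diagonal entries of the symbol are constant, so the diagonal blocks of the block Toeplitz
matrix are `iλ • 1`. The off-diagonal entry `u(w) = (w - b)/(1 - b w)` has the Taylor coefficients
`-b, (1 - b²), (1 - b²) b, (1 - b²) b², …`, so its Toeplitz matrix `T` is lower triangular, and the
other off-diagonal block is `-Tᵀ` because that entry is `-u(w⁻¹)`. A Schur complement reduces
`D_N` to `det (T Tᵀ - λ²)`. Since `|u| = 1` on the circle, `T Tᵀ` differs from the identity by
the rank-one matrix `(1 - b²) v vᵀ` with `v m = b ^ m`, and the characteristic polynomial of a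
rank-one matrix gives the result.
-/

open scoped BigOperators
open Filter

/-- The `k`-th Fourier coefficient of a symbol `t` on the unit circle. -/
noncomputable def symbolCoeff (t : ℂ → ℂ) (k : ℤ) : ℂ :=
  (1 / (2 * Real.pi)) *
    ∫ θ in (0:ℝ)..(2 * Real.pi),
      t (Complex.exp (Complex.I * (θ : ℂ))) * Complex.exp (-(Complex.I * (k : ℂ) * (θ : ℂ)))

/-- The `N × N` Toeplitz determinant `D_N[t]` generated by the symbol `t`. -/
noncomputable def toeplitzDet (t : ℂ → ℂ) (N : ℕ) : ℂ :=
  Matrix.det (Matrix.of fun m n : Fin N => symbolCoeff t ((m : ℤ) - (n : ℤ)))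

/-- The `k`-th (matrix) Fourier coefficient of a `2 × 2`-matrix-valued symbol. -/
noncomputable def blockSymbolCoeff (Φ : ℂ → Matrix (Fin 2) (Fin 2) ℂ) (k : ℤ) :
    Matrix (Fin 2) (Fin 2) ℂ :=
  Matrix.of fun i j => symbolCoeff (fun w => Φ w i j) k

/-- The `2N × 2N` block Toeplitz determinant `D_N[Φ]` generated by the
`2 × 2`-matrix-valued symbol `Φ`. -/
noncomputable def blockToeplitzDet (Φ : ℂ → Matrix (Fin 2) (Fin 2) ℂ) (N : ℕ) : ℂ :=
  Matrix.det (Matrix.of fun p q : Fin N × Fin 2 =>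
    blockSymbolCoeff Φ ((p.1 : ℤ) - (q.1 : ℤ)) p.2 q.2)

open Complex Finset Matrix MeasureTheory

theorem integral_exp_int_mul_I (m : ℤ) :
    ∫ θ in (0:ℝ)..2 * Real.pi, exp (I * m * θ) = if m = 0 then (2 * Real.pi : ℂ) else 0 := by
  split_ifs with hm
  · simp [hm]
  · have hc : I * m ≠ 0 := mul_ne_zero I_ne_zero (Int.cast_ne_zero.mpr hm)
    have hper : exp (I * m * (2 * Real.pi : ℝ)) = 1 := by
      convert exp_int_mul_two_pi_mul_I m using 2; push_cast; ring
    rw [integral_exp_mul_complex hc, hper]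
    simp

theorem symbolCoeff_eq_of_hasSum_pow {t : ℂ → ℂ} {a : ℕ → ℂ} (ha : Summable (‖a ·‖))
    (ht : ∀ w : ℂ, ‖w‖ = 1 → HasSum (fun n => a n * w ^ n) (t w)) (k : ℤ) :
    symbolCoeff t k = if 0 ≤ k then a k.toNat else 0 := by
  have hterm : ∀ (n : ℕ) (θ : ℝ), a n * exp (I * θ) ^ n * exp (-(I * k * θ)) =
      a n * exp (I * ((n - k : ℤ) : ℂ) * θ) := by
    intro n θ
    rw [mul_assoc, ← exp_nat_mul, ← exp_add]; push_cast; ring_nf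
  have hsum : HasSum (fun n : ℕ => if (n : ℤ) = k then 2 * Real.pi * a n else 0)
      (∫ θ in (0:ℝ)..2 * Real.pi, t (exp (I * θ)) * exp (-(I * k * θ))) := by
    refine (intervalIntegral.hasSum_integral_of_dominated_convergence
      (F := fun n θ => a n * exp (I * θ) ^ n * exp (-(I * k * θ))) (fun n _ => ‖a n‖)
      (fun n => by fun_prop) (fun n => ae_of_all _ fun θ _ => ?_) (ae_of_all _ fun _ _ => ha)
      intervalIntegrable_const (ae_of_all _ fun θ _ => ?_)).congr_fun (fun n => ?_)
    · rw [hterm, norm_mul, norm_exp]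
      simp
    · exact (ht _ (norm_exp_I_mul_ofReal θ)).mul_right _
    · simp only [hterm, intervalIntegral.integral_const_mul, integral_exp_int_mul_I, sub_eq_zero]
      split_ifs <;> ring
  have hsingle := hasSum_single (f := fun n : ℕ => if (n : ℤ) = k then 2 * Real.pi * a n else 0)
    k.toNat fun n hn => if_neg (by omega)
  rw [symbolCoeff, hsum.unique hsingle]
  rcases le_or_gt 0 k with hk | hk
  · rw [if_pos (Int.toNat_of_nonneg hk), if_pos hk]
    field_simp
  · rw [if_neg (by omega), if_neg hk.not_ge, mul_zero]

theorem periodic_exp_I_mul_ofReal : Function.Periodic (fun θ : ℝ => exp (I * θ)) (2 * Real.pi) :=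
  fun θ => by simpa [mul_comm] using exp_mul_I_periodic (θ : ℂ)

theorem symbolCoeff_comp_inv (t : ℂ → ℂ) (k : ℤ) :
    symbolCoeff (fun w => t w⁻¹) k = symbolCoeff t (-k) := by
  set f : ℝ → ℂ := fun θ => t (exp (I * θ)) * exp (I * θ) ^ k
  have hf : Function.Periodic f (2 * Real.pi) :=
    periodic_exp_I_mul_ofReal.comp fun w => t w * w ^ k
  have hreflect : ∀ θ : ℝ, t (exp (I * θ))⁻¹ * exp (-(I * k * θ)) = f (-θ) := by
    intro θ
    simp only [f, ← exp_neg, ← exp_int_mul]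
    push_cast; ring_nf
  have hf_eq : ∀ θ : ℝ, t (exp (I * θ)) * exp (-(I * ((-k : ℤ) : ℂ) * θ)) = f θ := by
    intro θ
    simp only [f, ← exp_int_mul]
    push_cast; ring_nf
  unfold symbolCoeff
  simp only [hreflect, hf_eq, intervalIntegral.integral_comp_neg, neg_zero]
  simpa using hf.intervalIntegral_add_eq (-(2 * Real.pi)) 0

theorem symbolCoeff_neg (t : ℂ → ℂ) (k : ℤ) :
    symbolCoeff (fun w => -t w) k = -symbolCoeff t k := by
  simp [symbolCoeff, intervalIntegral.integral_neg]

theorem symbolCoeff_const (c : ℂ) (k : ℤ) :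
    symbolCoeff (fun _ => c) k = if k = 0 then c else 0 := by
  have h : ∀ θ : ℝ, c * exp (-(I * k * θ)) = c * exp (I * ((-k : ℤ) : ℂ) * θ) := fun θ => by
    push_cast; ring_nf
  simp only [symbolCoeff, h, intervalIntegral.integral_const_mul, integral_exp_int_mul_I,
    neg_eq_zero]
  split_ifs
  · field_simp
  · simp

noncomputable def toeplitzMatrix (t : ℂ → ℂ) (N : ℕ) : Matrix (Fin N) (Fin N) ℂ :=
  of fun m n => symbolCoeff t ((m : ℤ) - (n : ℤ))

theorem blockToeplitzDet_eq_det_fromBlocks (Φ : ℂ → Matrix (Fin 2) (Fin 2) ℂ) (N : ℕ) :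
    blockToeplitzDet Φ N = (fromBlocks
      (toeplitzMatrix (Φ · 0 0) N) (toeplitzMatrix (Φ · 0 1) N)
      (toeplitzMatrix (Φ · 1 0) N) (toeplitzMatrix (Φ · 1 1) N)).det := by
  let e : Fin N ⊕ Fin N ≃ Fin N × Fin 2 :=
    { toFun := Sum.elim (·, 0) (·, 1)
      invFun := fun p => if p.2 = 0 then .inl p.1 else .inr p.1
      left_inv := by rintro (i | i) <;> simp
      right_inv := by rintro ⟨i, j⟩; fin_cases j <;> simp }
  rw [blockToeplitzDet, ← det_submatrix_equiv_self e]
  congr 1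
  ext (p | p) (q | q) <;> rfl

theorem toeplitzMatrix_const (c : ℂ) (N : ℕ) : toeplitzMatrix (fun _ => c) N = c • 1 := by
  ext m n
  simp [toeplitzMatrix, symbolCoeff_const, one_apply, sub_eq_zero, Fin.ext_iff]

section LowerToeplitz

variable {R : Type*}

def lowerToeplitz [Zero R] (a : ℕ → R) (N : ℕ) : Matrix (Fin N) (Fin N) R :=
  of fun m n => if n ≤ m then a (m - n) else 0

theorem lowerToeplitz_mul_transpose_apply_of_le [CommSemiring R] (a : ℕ → R) {N : ℕ}
    {m n : Fin N} (h : m ≤ n) :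
    (lowerToeplitz a N * (lowerToeplitz a N)ᵀ) m n =
      ∑ j ∈ range (m + 1), a j * a (j + (n - m)) := by
  have hm : (m : ℕ) + 1 ≤ N := m.isLt
  simp only [mul_apply, transpose_apply, lowerToeplitz, of_apply, Fin.le_iff_val_le_val]
  rw [Fin.sum_univ_eq_sum_range (fun k => (if k ≤ (m : ℕ) then a (m - k) else 0) *
      (if k ≤ (n : ℕ) then a (n - k) else 0)) N,
    ← sum_subset (range_subset_range.mpr hm) fun k _ hk => by simp at hk; simp [hk.not_ge],
    ← sum_range_reflect]
  refine sum_congr rfl fun j hj => ?_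
  have hj : j ≤ m := Nat.lt_succ_iff.mp (mem_range.mp hj)
  rw [if_pos (by omega), if_pos (by omega), show (m : ℕ) - (m + 1 - 1 - j) = j by omega,
    show (n : ℕ) - (m + 1 - 1 - j) = j + (n - m) by omega]

end LowerToeplitz

theorem det_smul_one_sub_vecMulVec {R n : Type*} [CommRing R] [Fintype n] [DecidableEq n]
    (t : R) (u v : n → R) :
    (t • 1 - vecMulVec u v).det = t ^ Fintype.card n - (u ⬝ᵥ v) * t ^ (Fintype.card n - 1) := by
  rw [smul_one_eq_diagonal, ← scalar_apply, ← eval_charpoly, charpoly_vecMulVec]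
  simp

theorem det_fromBlocks_smul_one {n : Type*} [Fintype n] [DecidableEq n] (a : ℂ)
    (B C : Matrix n n ℂ) :
    (fromBlocks (a • 1) B C (a • 1)).det = (a ^ 2 • 1 - B * C).det := by
  have hne : ∀ a : ℂ, a ≠ 0 →
      (fromBlocks (a • 1) B C (a • 1)).det = (a ^ 2 • 1 - B * C).det := by
    intro a ha
    let _ : Invertible (a • (1 : Matrix n n ℂ)) :=
      ⟨a⁻¹ • 1, by simp [smul_smul, ha], by simp [smul_smul, ha]⟩
    rw [det_fromBlocks₂₂, show ⅟(a • (1 : Matrix n n ℂ)) = a⁻¹ • 1 from rfl, det_smul,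
      det_one, mul_one, ← det_smul, smul_sub, Matrix.mul_smul, Matrix.mul_one, Matrix.smul_mul,
      smul_smul, smul_smul, mul_inv_cancel₀ ha, one_smul, sq]
  refine congrFun (Continuous.ext_on (dense_compl_singleton 0) ?_ ?_ hne) a
  · fun_prop
  · fun_prop

def blaschkeCoeff (β : ℂ) : ℕ → ℂ
  | 0 => -β
  | n + 1 => (1 - β ^ 2) * β ^ n

theorem summable_norm_blaschkeCoeff {β : ℂ} (hβ : ‖β‖ < 1) :
    Summable (‖blaschkeCoeff β ·‖) := by
  rw [← summable_nat_add_iff 1]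
  simpa [blaschkeCoeff] using
    (summable_geometric_of_lt_one (norm_nonneg β) hβ).mul_left ‖1 - β ^ 2‖

theorem hasSum_blaschkeCoeff {β w : ℂ} (h : ‖β * w‖ < 1) :
    HasSum (fun n => blaschkeCoeff β n * w ^ n) ((w - β) / (1 - β * w)) := by
  have hne : 1 - β * w ≠ 0 := fun h0 => by simp [← sub_eq_zero.mp h0] at h
  refine (hasSum_nat_add_iff' 1).mp ?_
  have hsum : (w - β) / (1 - β * w) - ∑ i ∈ range 1, blaschkeCoeff β i * w ^ i =
      (1 - β ^ 2) * w * (1 - β * w)⁻¹ := by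
    rw [sum_range_one]
    simp only [blaschkeCoeff, pow_zero, mul_one]
    rw [sub_neg_eq_add, ← div_eq_mul_inv, div_add' _ _ _ hne, div_left_inj' hne]
    ring
  rw [hsum]
  exact ((hasSum_geometric_of_norm_lt_one h).mul_left _).congr_fun fun n => by
    simp only [blaschkeCoeff]
    ring

theorem symbolCoeff_blaschke {β : ℂ} (hβ : ‖β‖ < 1) (k : ℤ) :
    symbolCoeff (fun w => (w - β) / (1 - β * w)) k =
      if 0 ≤ k then blaschkeCoeff β k.toNat else 0 :=
  symbolCoeff_eq_of_hasSum_pow (summable_norm_blaschkeCoeff hβ)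
    (fun w hw => hasSum_blaschkeCoeff (by rwa [norm_mul, hw, mul_one])) k

theorem toeplitzMatrix_blaschke {β : ℂ} (hβ : ‖β‖ < 1) (N : ℕ) :
    toeplitzMatrix (fun w => (w - β) / (1 - β * w)) N = lowerToeplitz (blaschkeCoeff β) N := by
  ext m n
  simp only [toeplitzMatrix, lowerToeplitz, of_apply, symbolCoeff_blaschke hβ, sub_nonneg,
    Nat.cast_le, Fin.le_iff_val_le_val]
  split_ifs
  · congr; omega
  · rfl

theorem toeplitzMatrix_blaschke_inv {β : ℂ} (hβ : ‖β‖ < 1) (N : ℕ) :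
    toeplitzMatrix (fun w => -((w⁻¹ - β) / (1 - β * w⁻¹))) N =
      -(lowerToeplitz (blaschkeCoeff β) N)ᵀ := by
  rw [← toeplitzMatrix_blaschke hβ]
  ext m n
  simp only [toeplitzMatrix, of_apply, Matrix.neg_apply, transpose_apply, symbolCoeff_neg]
  rw [symbolCoeff_comp_inv (fun w => (w - β) / (1 - β * w)), neg_sub]

theorem sum_blaschkeCoeff_mul_blaschkeCoeff_add (β : ℂ) (m d : ℕ) :
    ∑ j ∈ range (m + 1), blaschkeCoeff β j * blaschkeCoeff β (j + d) =
      (if d = 0 then 1 else 0) - (1 - β ^ 2) * (β ^ m * β ^ (m + d)) := by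
  induction m with
  | zero => cases d <;> simp [blaschkeCoeff] <;> ring
  | succ m ih =>
    rw [sum_range_succ, ih, show m + 1 + d = (m + d) + 1 by omega]
    simp only [blaschkeCoeff]
    ring

theorem lowerToeplitz_blaschkeCoeff_mul_transpose (β : ℂ) (N : ℕ) :
    lowerToeplitz (blaschkeCoeff β) N * (lowerToeplitz (blaschkeCoeff β) N)ᵀ =
      1 - (1 - β ^ 2) •
        vecMulVec (fun m : Fin N => β ^ (m : ℕ)) (fun m : Fin N => β ^ (m : ℕ)) := by
  set L := lowerToeplitz (blaschkeCoeff β) N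
  have hentry : ∀ m n : Fin N, m ≤ n → (L * Lᵀ) m n =
      (if m = n then 1 else 0) - (1 - β ^ 2) * (β ^ (m : ℕ) * β ^ (n : ℕ)) := by
    intro m n h
    obtain ⟨d, hd⟩ : ∃ d, (n : ℕ) = m + d := Nat.exists_eq_add_of_le h
    rw [lowerToeplitz_mul_transpose_apply_of_le _ h, hd, Nat.add_sub_cancel_left,
      sum_blaschkeCoeff_mul_blaschkeCoeff_add]
    simp [Fin.ext_iff, hd]
  ext m n
  simp only [Matrix.sub_apply, one_apply, Matrix.smul_apply, vecMulVec_apply, smul_eq_mul]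
  rcases le_total m n with h | h
  · exact hentry m n h
  · rw [← transpose_apply (L * Lᵀ), transpose_mul, transpose_transpose, hentry n m h,
      mul_comm (β ^ (n : ℕ))]
    simp only [eq_comm]

theorem det_smul_one_add_lowerToeplitz_blaschkeCoeff_mul_transpose (β μ : ℂ) {N : ℕ}
    (hN : 1 ≤ N) :
    (μ • 1 + lowerToeplitz (blaschkeCoeff β) N * (lowerToeplitz (blaschkeCoeff β) N)ᵀ).det =
      (1 + μ) ^ (N - 1) * (β ^ (2 * N) + μ) := by
  set w : Fin N → ℂ := fun m => β ^ (m : ℕ)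
  have hdot : ((1 - β ^ 2) • w) ⬝ᵥ w = 1 - β ^ (2 * N) := by
    simp only [dotProduct, Pi.smul_apply, smul_eq_mul, w, mul_assoc, ← pow_add, ← mul_sum]
    rw [Fin.sum_univ_eq_sum_range (fun m => β ^ (m + m)) N]
    simp only [← two_mul, pow_mul]
    linear_combination -geom_sum_mul (β ^ 2) N
  have hmat : μ • 1 + (1 - (1 - β ^ 2) • vecMulVec w w) =
      (1 + μ) • 1 - vecMulVec ((1 - β ^ 2) • w) w := by
    rw [smul_vecMulVec]
    module
  rw [lowerToeplitz_blaschkeCoeff_mul_transpose, hmat, det_smul_one_sub_vecMulVec,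
    Fintype.card_fin, hdot]
  obtain ⟨M, rfl⟩ := Nat.exists_eq_add_of_le' hN
  simp only [Nat.add_sub_cancel]
  ring

theorem xy_disorder_line_char_poly_general
    (b : ℝ) (hb1 : |b| < 1)
    (N : ℕ) (hN : 1 ≤ N) (lam : ℂ) :
    blockToeplitzDet
      (fun w => !![Complex.I * lam, (w - (b : ℂ)) / (1 - (b : ℂ) * w);
                   -((w⁻¹ - (b : ℂ)) / (1 - (b : ℂ) * w⁻¹)), Complex.I * lam]) N
      = (1 - lam ^ 2) ^ (N - 1) * ((b : ℂ) ^ (2 * N) - lam ^ 2) := by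
  have hb : ‖(b : ℂ)‖ < 1 := by rwa [norm_real, Real.norm_eq_abs]
  rw [blockToeplitzDet_eq_det_fromBlocks]
  simp only [of_apply, cons_val', cons_val_zero, cons_val_one, empty_val', cons_val_fin_one]
  rw [toeplitzMatrix_const, toeplitzMatrix_blaschke hb, toeplitzMatrix_blaschke_inv hb,
    det_fromBlocks_smul_one, Matrix.mul_neg, sub_neg_eq_add,
    det_smul_one_add_lowerToeplitz_blaschkeCoeff_mul_transpose _ _ hN, mul_pow, I_sq]
  ring

/-- Example 2: characteristic polynomial of the correlation matrix on the XY disorder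
line, `f(z) = z⁻¹(z−b)²` with `0 < |b| < 1`. -/
theorem xy_disorder_line_char_poly
    (b : ℝ) (hb0 : 0 < |b|) (hb1 : |b| < 1)
    (N : ℕ) (hN : 1 ≤ N) (lam : ℂ) :
    blockToeplitzDet
      (fun w => !![Complex.I * lam, (w - (b : ℂ)) / (1 - (b : ℂ) * w);
                   -((w⁻¹ - (b : ℂ)) / (1 - (b : ℂ) * w⁻¹)), Complex.I * lam]) N
      = (1 - lam ^ 2) ^ (N - 1) * ((b : ℂ) ^ (2 * N) - lam ^ 2) :=
  xy_disorder_line_char_poly_general b hb1 N hN lam
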